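/- Let F be a factorization forest of a word w with respect to μ : A* → M, and let I be a node of F that is a factorization of the factor w[i:j] of w. Then μ(w[i:j]) equals μ(w[fr(I,F)]), the image under μ of the subword of w obtained by keeping exactly the positions in the frontier of I. -/

import Mathlib

inductive FForest (A : Type) : Type
  | leaf (a : A) : FForest A
  | node (children : List (FForest A)) : FForest A

namespace FForest

variable {A : Type} {M : Type} [Monoid M]

def wordOf : FForest A → List A
  | .leaf a => [a]
  | .node l => (l.attach.map (fun x => wordOf x.1)).flatten
decreasing_by simp only [FForest.node.sizeOf_spec]; have := List.sizeOf_lt_of_mem x.2; omega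

def height : FForest A → ℕ
  | .leaf _ => 1
  | .node l => 1 + (l.attach.map (fun x => height x.1)).foldr max 0
decreasing_by simp only [FForest.node.sizeOf_spec]; have := List.sizeOf_lt_of_mem x.2; omega

def prodOf (μ : A → M) (F : FForest A) : M := ((wordOf F).map μ).prod

inductive Valid (μ : A → M) : FForest A → Prop
  | leaf (a : A) : Valid μ (.leaf a)
  | binary (F₁ F₂ : FForest A) : Valid μ F₁ → Valid μ F₂ → Valid μ (.node [F₁, F₂])
  | idem (l : List (FForest A)) (e : M) : 3 ≤ l.length → (∀ F ∈ l, Valid μ F) →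
      e * e = e → (∀ F ∈ l, prodOf μ F = e) → Valid μ (.node l)

def subtreeAt : FForest A → List ℕ → Option (FForest A)
  | F, [] => some F
  | .leaf _, _ :: _ => none
  | .node l, i :: p =>
      match l[i]? with
      | some c => subtreeAt c p
      | none => none
termination_by F p => p.length

def offsetAt : FForest A → List ℕ → ℕ
  | _, [] => 0
  | .leaf _, _ :: _ => 0
  | .node l, i :: p =>
      ((l.take i).map (fun c => (wordOf c).length)).sum +
      (match l[i]? with
       | some c => offsetAt c p
       | none => 0)
termination_by F p => p.length

inductive DepPath : FForest A → List ℕ → Prop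
  | nil (F : FForest A) : DepPath F []
  | cons (l : List (FForest A)) (i : ℕ) (p : List ℕ) (hi : i < l.length)
      (hd : i = 0 ∨ i = l.length - 1) (h : DepPath l[i] p) : DepPath (.node l) (i :: p)

def IsPath (F : FForest A) (p : List ℕ) : Prop := (subtreeAt F p).isSome

def IterPath (F : FForest A) (p : List ℕ) : Prop :=
  ∃ q i l, p = q ++ [i] ∧ subtreeAt F q = some (.node l) ∧ 1 ≤ i ∧ i + 2 ≤ l.length

def PartPath (F : FForest A) (p : List ℕ) : Prop := p = [] ∨ IterPath F p

def depOf (F : FForest A) (p : List ℕ) : Set (List ℕ) :=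
  {r | ∃ q I, subtreeAt F p = some I ∧ DepPath I q ∧ r = p ++ q}

def frSet (F : FForest A) (p : List ℕ) : Set ℕ :=
  {j | ∃ q I a, subtreeAt F p = some I ∧ DepPath I q ∧
        subtreeAt F (p ++ q) = some (.leaf a) ∧ j = offsetAt F (p ++ q)}

mutual
def frWord : FForest A → List A
  | .leaf a => [a]
  | .node [] => []
  | .node (f :: rest) => frWord f ++ frWordLast rest
def frWordLast : List (FForest A) → List A
  | [] => []
  | [g] => frWord g
  | _ :: g :: rest => frWordLast (g :: rest)
end

mutual
def frList : FForest A → List ℕ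
  | .leaf _ => [0]
  | .node [] => []
  | .node (f :: rest) => frList f ++ (frListLast rest).map (· + (wordOf f).length)
def frListLast : List (FForest A) → List ℕ
  | [] => []
  | [g] => frList g
  | g :: rest => (frListLast rest).map (· + (wordOf g).length)
end

end FForest


namespace FForest

variable {A : Type} {M : Type} [Monoid M]

lemma wordOf_node (l : List (FForest A)) :
    wordOf (.node l) = (l.map wordOf).flatten := by
  rw [wordOf]
  congr 1
  simp [List.attach_map_val]

lemma prod_wordOf_node (μ : A → M) (l : List (FForest A)) :
    ((wordOf (.node l)).map μ).prod
      = (l.map (fun F => ((wordOf F).map μ).prod)).prod := by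
  rw [wordOf_node, List.map_flatten, List.prod_flatten, List.map_map, List.map_map]
  rfl

lemma valid_children {μ : A → M} {l : List (FForest A)}
    (h : Valid μ (.node l)) : ∀ c ∈ l, Valid μ c := by
  cases h with
  | binary F₁ F₂ h1 h2 => intro c hc; simp at hc; rcases hc with rfl | rfl <;> assumption
  | idem l e _ hv _ _ => exact hv

lemma valid_subtree {μ : A → M} :
    ∀ (p : List ℕ) (F I : FForest A), Valid μ F → subtreeAt F p = some I → Valid μ I := by
  intro p
  induction p with
  | nil => intro F I hF h; rw [subtreeAt] at h; cases h; exact hF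
  | cons i p ih =>
    intro F I hF h
    cases F with
    | leaf a => rw [subtreeAt] at h; cases h
    | node l =>
      rw [subtreeAt] at h
      cases hc : l[i]? with
      | none => rw [hc] at h; cases h
      | some c =>
        rw [hc] at h
        obtain ⟨hlt, rfl⟩ := List.getElem?_eq_some_iff.mp hc
        exact ih _ I (valid_children hF _ (List.getElem_mem hlt)) h

lemma frWordLast_pick :
    ∀ (l : List (FForest A)), l ≠ [] → ∃ g ∈ l, frWordLast l = frWord g := by
  intro l
  induction l with
  | nil => intro h; exact absurd rfl h
  | cons f rest ih =>
    intro _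
    cases rest with
    | nil => exact ⟨f, by simp, by rw [frWordLast]⟩
    | cons g t =>
      obtain ⟨g', hg', he⟩ := ih (by simp)
      exact ⟨g', by simp [hg'], by rw [frWordLast]; exact he⟩

lemma prod_idem_pow {e : M} (he : e * e = e) : ∀ n, 1 ≤ n → e ^ n = e := by
  intro n
  induction n with
  | zero => omega
  | succ k ih =>
    intro _
    rcases Nat.eq_or_lt_of_le (Nat.one_le_iff_ne_zero.mpr (Nat.succ_ne_zero k)) with h | h
    · cases k with
      | zero => simp
      | succ m => rw [pow_succ, ih (by omega), he]
    · rw [pow_succ, ih (by omega), he]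

lemma prod_frWord_eq {μ : A → M} :
    ∀ (F : FForest A), Valid μ F →
      ((wordOf F).map μ).prod = ((frWord F).map μ).prod := by
  intro F hF
  induction hF with
  | leaf a => rw [wordOf, frWord]
  | binary F₁ F₂ h1 h2 ih1 ih2 =>
    rw [prod_wordOf_node, frWord, frWordLast]
    simp [ih1, ih2]
  | idem l e hlen hv he hprod ih =>
    have hne : l ≠ [] := by intro h; subst h; simp at hlen
    cases l with
    | nil => simp at hlen
    | cons f rest =>
      have hrne : rest ≠ [] := by
        intro h; subst h; simp at hlen
      obtain ⟨g, hg, hgl⟩ := frWordLast_pick rest hrne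
      rw [prod_wordOf_node, frWord, hgl]
      have hall : ∀ c ∈ f :: rest, ((wordOf c).map μ).prod = e := by
        intro c hc; exact hprod c hc
      have h1 : ((f :: rest).map (fun F => ((wordOf F).map μ).prod))
          = List.replicate (f :: rest).length e := by
        have h2 := List.eq_replicate_of_mem
          (l := (f :: rest).map (fun F => ((wordOf F).map μ).prod)) (a := e) (by
            intro b hb
            simp only [List.mem_map] at hb
            obtain ⟨c, hc, rfl⟩ := hb
            exact hall c hc)
        simpa using h2
      rw [h1, List.prod_replicate, prod_idem_pow he _ (by simp), List.map_append,
        List.prod_append, ← ih f (by simp), ← ih g (by simp [hg]),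
        hall f (by simp), hall g (by simp [hg]), he]

end FForest


theorem value_eq_frontier_value {A M : Type} [Monoid M] (μ : A → M) (F : FForest A)
    (hF : FForest.Valid μ F) (p : List ℕ) (I : FForest A)
    (hp : FForest.subtreeAt F p = some I) :
    ((FForest.wordOf I).map μ).prod = ((FForest.frWord I).map μ).prod := by
  exact FForest.prod_frWord_eq I (FForest.valid_subtree p F I hF hp)
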